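/- arXiv:1306.0686 — 2 statements merged into one kernel-verified Lean document; each statement's English description precedes it below -/
import Mathlib

section
/- Let τ₁, ..., τ_n (n ≥ 2) be i.i.d. nonnegative integer-valued random variables with finite mean μ = E[τ₁]. Let G_t = Σ_{s=1}^{t-1} 1{s + τ_s ≥ t} and G*_n = max_{1 ≤ t ≤ n} G_t. Then E[G*_n] ≤ μ + 2·log n + √(4·μ·log n) + 1. -/
/-!
Each `G_t` is a sum of independent indicators `1{τ_s ≥ t - s}`, and since `τ_s` has the law of
`τ₁` their means add up to at most `∑_{k ≥ 1} P(τ₁ ≥ k) = E τ₁ = m`. Bounding each factor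
`1 + p (eᵗ - 1)` of the moment generating function by `exp (p (eᵗ - 1))` gives the Poisson-type
Chernoff bound `P(G_t ≥ m + x) ≤ exp (m (eᵗ - 1) - t (m + x))`, which for
`x = 2 log n + √(4 m log n)` and a suitable `t` is at most `1 / n²`. A union bound over `t ≤ n`,
together with `G*_n ≤ n` on the exceptional event, costs one more unit.
-/

open MeasureTheory ProbabilityTheory Finset Real

lemma exists_poisson_chernoff_exponent {m b : ℝ} (hm : 0 ≤ m) (hb : 0 ≤ b) :
    ∃ t, 0 ≤ t ∧ m * (exp t - 1) - t * (m + b + √(2 * m * b)) ≤ -b := by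
  rcases hm.eq_or_lt with rfl | hm
  · exact ⟨1, zero_le_one, by simp⟩
  set x := b + √(2 * m * b)
  have hx : 0 ≤ x := by positivity
  have hsq : √(2 * m * b) ^ 2 = 2 * m * b := sq_sqrt (by positivity)
  refine ⟨log (1 + x / m), log_nonneg (le_add_of_nonneg_right (by positivity)), ?_⟩
  -- `t = log (1 + x / m)` minimises the left side; `log (1 + u) ≥ 2u / (u + 2)` then reduces
  -- the claim to `x (x - b) ≥ 2 m b`, i.e. `√(2mb) (b + √(2mb)) ≥ 2mb`
  have hlog : 2 * x / (x + 2 * m) ≤ log (1 + x / m) := by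
    convert le_log_one_add_of_nonneg (div_nonneg hx hm.le) using 1
    field_simp
  have key : x + b ≤ 2 * x / (x + 2 * m) * (m + x) := by
    rw [div_mul_eq_mul_div, le_div_iff₀ (by positivity)]
    nlinarith [mul_nonneg hb (sqrt_nonneg (2 * m * b))]
  rw [exp_log (by positivity), add_assoc]
  have : m * (1 + x / m - 1) = x := by field_simp; ring
  nlinarith [mul_le_mul_of_nonneg_right hlog (by positivity : 0 ≤ m + x)]

lemma card_filter_le_add_le (t c : ℕ) : #{s ∈ Icc 1 (t - 1) | t ≤ s + c} ≤ c := by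
  calc #{s ∈ Icc 1 (t - 1) | t ≤ s + c} ≤ #(Ico (t - c) t) :=
        card_le_card fun s hs => by simp only [mem_filter, mem_Icc, mem_Ico] at hs ⊢; omega
    _ ≤ c := by simp only [Nat.card_Ico]; omega

section Outstanding

variable {Ω : Type*}

lemma exp_mul_indicator_one (A : Set Ω) (t : ℝ) :
    (fun ω => exp (t * A.indicator 1 ω)) = fun ω => 1 + A.indicator (fun _ => exp t - 1) ω := by
  ext ω; by_cases h : ω ∈ A <;> simp [h]

def outstanding (τ : ℕ → Ω → ℕ) (t : ℕ) (ω : Ω) : ℕ :=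
  ∑ s ∈ Icc 1 (t - 1), if t ≤ s + τ s ω then 1 else 0

lemma outstanding_le (τ : ℕ → Ω → ℕ) (t : ℕ) (ω : Ω) : outstanding τ t ω ≤ t - 1 := by
  simpa [outstanding] using card_filter_le (Icc 1 (t - 1)) _

variable [MeasurableSpace Ω] {μ : Measure Ω}

lemma ProbabilityTheory.iIndepFun.iIndepSet_preimage {ι : Type*} {β : ι → Type*}
    {mβ : ∀ i, MeasurableSpace (β i)} {f : ∀ i, Ω → β i} (hf : iIndepFun f μ)
    {B : ∀ i, Set (β i)} (hB : ∀ i, MeasurableSet (B i)) (hfm : ∀ i, Measurable (f i)) :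
    iIndepSet (fun i => f i ⁻¹' B i) μ :=
  (iIndepSet_iff_meas_biInter fun i => hfm i (hB i)).2 fun S =>
    iIndepFun_iff_measure_inter_preimage_eq_mul.1 hf S fun i _ => hB i

lemma measurable_outstanding {τ : ℕ → Ω → ℕ} (hmeas : ∀ s, Measurable (τ s)) (t : ℕ) :
    Measurable (outstanding τ t) :=
  Finset.measurable_sum _ fun s _ =>
    (measurable_of_countable fun j => if t ≤ s + j then 1 else 0).comp (hmeas s)

variable [IsProbabilityMeasure μ]

lemma mgf_indicator_one {A : Set Ω} (hA : MeasurableSet A) (t : ℝ) :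
    mgf (A.indicator 1) μ t = 1 + μ.real A * (exp t - 1) := by
  rw [mgf, exp_mul_indicator_one, integral_add (integrable_const _)
    ((integrable_const _).indicator hA), integral_const, integral_indicator_const _ hA]
  simp [mul_comm]

lemma measureReal_sum_indicator_ge_le_exp {ι : Type*} {A : ι → Set Ω}
    (hA : ∀ i, MeasurableSet (A i)) (hindep : iIndepSet A μ) (S : Finset ι) {m t : ℝ}
    (ht : 0 ≤ t) (hm : ∑ i ∈ S, μ.real (A i) ≤ m) (a : ℝ) :
    μ.real {ω | a ≤ ∑ i ∈ S, (A i).indicator 1 ω} ≤ exp (m * (exp t - 1) - t * a) := by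
  have hX : iIndepFun (fun i => (A i).indicator (1 : Ω → ℝ)) μ := hindep.iIndepFun_indicator
  have hmeas (i : ι) : Measurable ((A i).indicator (1 : Ω → ℝ)) :=
    measurable_const.indicator (hA i)
  have hint : ∀ i ∈ S, Integrable (fun ω => exp (t * (A i).indicator 1 ω)) μ := fun i _ => by
    rw [exp_mul_indicator_one]
    exact (integrable_const 1).add ((integrable_const _).indicator (hA i))
  have hexp : 0 ≤ exp t - 1 := by linarith [one_le_exp ht]
  calc μ.real {ω | a ≤ ∑ i ∈ S, (A i).indicator 1 ω}
      = μ.real {ω | a ≤ (∑ i ∈ S, (A i).indicator (1 : Ω → ℝ)) ω} := by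
        simp only [Finset.sum_apply]
    _ ≤ exp (-t * a) * mgf (∑ i ∈ S, (A i).indicator 1) μ t :=
      measure_ge_le_exp_mul_mgf a ht (hX.integrable_exp_mul_sum hmeas hint)
    _ = exp (-t * a) * ∏ i ∈ S, (1 + μ.real (A i) * (exp t - 1)) := by
      simp_rw [hX.mgf_sum hmeas, mgf_indicator_one (hA _)]
    _ ≤ exp (-t * a) * ∏ i ∈ S, exp (μ.real (A i) * (exp t - 1)) := by
      gcongr with i
      rw [add_comm]
      exact add_one_le_exp _
    _ = exp (-t * a) * exp ((∑ i ∈ S, μ.real (A i)) * (exp t - 1)) := by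
      rw [← exp_sum, sum_mul]
    _ ≤ exp (-t * a) * exp (m * (exp t - 1)) := by gcongr
    _ = exp (m * (exp t - 1) - t * a) := by rw [← exp_add]; ring_nf

lemma sum_measureReal_le_add_le_integral {f : Ω → ℕ} (hf : Measurable f)
    (hint : Integrable (fun ω => (f ω : ℝ)) μ) (t : ℕ) :
    ∑ s ∈ Icc 1 (t - 1), μ.real {ω | t ≤ s + f ω} ≤ μ[fun ω => (f ω : ℝ)] := by
  have hA (s : ℕ) : MeasurableSet {ω | t ≤ s + f ω} := hf (.of_discrete (s := {k | t ≤ s + k}))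
  calc ∑ s ∈ Icc 1 (t - 1), μ.real {ω | t ≤ s + f ω}
      = ∫ ω, ∑ s ∈ Icc 1 (t - 1), {ω | t ≤ s + f ω}.indicator 1 ω ∂μ := by
        rw [integral_finsetSum _ fun s _ => (integrable_const 1).indicator (hA s)]
        simp_rw [integral_indicator_one (hA _)]
    _ ≤ μ[fun ω => (f ω : ℝ)] := by
      refine integral_mono (integrable_finsetSum _ fun s _ => (integrable_const 1).indicator (hA s))
        hint fun ω => ?_
      simpa [Set.indicator_apply] using card_filter_le_add_le t (f ω)

lemma measureReal_outstanding_ge_le_exp {τ : ℕ → Ω → ℕ} (hmeas : ∀ s, Measurable (τ s))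
    (hindep : iIndepFun τ μ) (hident : ∀ s, Measure.map (τ s) μ = Measure.map (τ 1) μ)
    (hint : Integrable (fun ω => (τ 1 ω : ℝ)) μ) {t : ℝ} (ht : 0 ≤ t) (a : ℝ) (k : ℕ) :
    μ.real {ω | a ≤ outstanding τ k ω} ≤
      exp (μ[fun ω => (τ 1 ω : ℝ)] * (exp t - 1) - t * a) := by
  set B : ℕ → Set ℕ := fun s => {j | k ≤ s + j}
  have hA (s : ℕ) : MeasurableSet (τ s ⁻¹' B s) := hmeas s .of_discrete
  have hsame (s : ℕ) : μ.real (τ s ⁻¹' B s) = μ.real {ω | k ≤ s + τ 1 ω} := by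
    rw [measureReal_def, measureReal_def, ← Measure.map_apply (hmeas s) .of_discrete, hident s,
      Measure.map_apply (hmeas 1) .of_discrete]
    rfl
  have hsum : ∑ s ∈ Icc 1 (k - 1), μ.real (τ s ⁻¹' B s) ≤ μ[fun ω => (τ 1 ω : ℝ)] := by
    simpa only [hsame] using sum_measureReal_le_add_le_integral (hmeas 1) hint k
  convert measureReal_sum_indicator_ge_le_exp hA
    (hindep.iIndepSet_preimage (fun _ => .of_discrete) hmeas) (Icc 1 (k - 1)) ht hsum a
    using 4 with ω
  simp [outstanding, Set.indicator_apply, B]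

lemma integral_natCast_sup_le {ι : Type*} (S : Finset ι) (f : ι → Ω → ℕ)
    (hf : ∀ i, Measurable (f i)) {a : ℝ} (ha : 0 ≤ a) {C : ℕ} (hC : ∀ i ∈ S, ∀ ω, f i ω ≤ C) :
    μ[fun ω => ((S.sup fun i => f i ω : ℕ) : ℝ)] ≤
      a + C * ∑ i ∈ S, μ.real {ω | a ≤ f i ω} := by
  set B := ⋃ i ∈ S, {ω | a ≤ f i ω}
  have hB : MeasurableSet B :=
    S.measurableSet_biUnion fun i _ => hf i (.of_discrete (s := {k : ℕ | a ≤ k}))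
  have hpoint (ω : Ω) :
      ((S.sup fun i => f i ω : ℕ) : ℝ) ≤ a + B.indicator (fun _ => (C : ℝ)) ω := by
    by_cases hω : ω ∈ B
    · rw [Set.indicator_of_mem hω]
      exact le_add_of_nonneg_of_le ha (by exact_mod_cast Finset.sup_le fun i hi => hC i hi ω)
    · rw [Set.indicator_of_notMem hω, add_zero]
      simp only [B, Set.mem_iUnion, Set.mem_ofPred_eq, not_exists, not_le] at hω
      exact (Nat.cast_le.2 (Finset.sup_le fun i hi => Nat.le_floor (hω i hi).le)).trans
        (Nat.floor_le ha)
  calc μ[fun ω => ((S.sup fun i => f i ω : ℕ) : ℝ)]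
      ≤ ∫ ω, a + B.indicator (fun _ => (C : ℝ)) ω ∂μ :=
        integral_mono_of_nonneg (.of_forall fun _ => Nat.cast_nonneg _)
          ((integrable_const a).add ((integrable_const _).indicator hB)) (.of_forall hpoint)
    _ = a + C * μ.real B := by
      rw [integral_add (integrable_const a) ((integrable_const _).indicator hB), integral_const,
        integral_indicator_const _ hB]
      simp [mul_comm]
    _ ≤ a + C * ∑ i ∈ S, μ.real {ω | a ≤ f i ω} := by
      gcongr
      exact measureReal_biUnion_finset_le _ _

end Outstanding

/-- For i.i.d. nonnegative integer delays `τ₁,…,τ_n` (`n ≥ 2`) with finite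
mean `m = E[τ₁]`, the maximum number of outstanding feedbacks
`G*_n = max_{1 ≤ t ≤ n} G_t`, where `G_t = ∑_{s=1}^{t-1} 1{s + τ_s ≥ t}`, satisfies
`E[G*_n] ≤ m + 2 log n + √(4 m log n) + 1`. -/
theorem expected_max_outstanding_le
    {Ω : Type*} [MeasurableSpace Ω] (μ : Measure Ω) [IsProbabilityMeasure μ]
    (n : ℕ) (hn : 2 ≤ n) (τ : ℕ → Ω → ℕ)
    (hmeas : ∀ s, Measurable (τ s))
    (hindep : iIndepFun τ μ)
    (hident : ∀ s, Measure.map (τ s) μ = Measure.map (τ 1) μ)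
    (hint : Integrable (fun ω => (τ 1 ω : ℝ)) μ)
    (m : ℝ) (hm : m = μ[fun ω => (τ 1 ω : ℝ)]) :
    μ[fun ω => (((Finset.Icc 1 n).sup (fun t =>
        ∑ s ∈ Finset.Icc 1 (t - 1), if t ≤ s + τ s ω then 1 else 0) : ℕ) : ℝ)]
      ≤ m + 2 * Real.log n + Real.sqrt (4 * m * Real.log n) + 1 := by
  have hn0 : (0 : ℝ) < n := Nat.cast_pos.2 (by omega)
  have hm0 : 0 ≤ m := hm ▸ integral_nonneg fun ω => Nat.cast_nonneg _
  obtain ⟨t, ht, hexp⟩ := exists_poisson_chernoff_exponent hm0 (b := 2 * log n) (by positivity)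
  set a := m + 2 * log n + √(2 * m * (2 * log n))
  have htail (k : ℕ) : μ.real {ω | a ≤ outstanding τ k ω} ≤ ((n : ℝ) ^ 2)⁻¹ := by
    refine (hm ▸ measureReal_outstanding_ge_le_exp hmeas hindep hident hint ht a k).trans ?_
    rw [← exp_log hn0, ← exp_nat_mul, ← exp_neg]
    exact exp_le_exp.2 (by push_cast; linarith)
  calc μ[fun ω => (((Icc 1 n).sup fun k => outstanding τ k ω : ℕ) : ℝ)]
      ≤ a + n * ∑ k ∈ Icc 1 n, μ.real {ω | a ≤ outstanding τ k ω} :=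
        integral_natCast_sup_le _ _ (measurable_outstanding hmeas) (by positivity)
          fun k hk ω => (outstanding_le τ k ω).trans (by simp only [mem_Icc] at hk; omega)
    _ ≤ a + n * ∑ k ∈ Icc 1 n, ((n : ℝ) ^ 2)⁻¹ := by gcongr with k; exact htail k
    _ = m + 2 * Real.log n + Real.sqrt (4 * m * Real.log n) + 1 := by
      simp only [sum_const, Nat.card_Icc, add_tsub_cancel_right, nsmul_eq_mul, a]
      field_simp
      ring_nf
end

section
/- In the stochastic K-armed bandit with [0,1]-valued rewards and delayed feedback, the Delayed-UCB1 algorithm, which at round t plays a_t = argmax_i (μ̂_{i,S_i(t-1)} + √(2 log t / S_i(t-1))) using only the S_i(t-1) rewards of arm i observed so far, satisfies for every n ≥ 1: E[R_n] ≤ Σ_{i: Δ_i > 0} [ 8·log n / Δ_i + 3.5·Δ_i ] + Σ_{i=1}^K Δ_i · E[G*_{i,n}]. -/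
/-!
Fix a suboptimal arm `i` with gap `Δ` and put `ℓ = ⌊8 log n / Δ²⌋ + 1`. The rounds in which `i` is
played while fewer than `ℓ` of its rewards have been observed number at most `ℓ + G*_{i,n}`: at
the last such round `t`, `T_i(t-1) ≤ S_i(t-1) + G*_{i,n} < ℓ + G*_{i,n}`. In every other round
where `i` is played its confidence radius is at most `Δ / 2`, so the UCB rule prefers it to an
optimal arm only if the optimal arm's index has fallen below `μ*` or the empirical mean of `i`
exceeds `μ_i` by its radius. For a fixed number `s ≤ t` of observations Hoeffding's inequality
bounds each of these events by `t⁻⁴`; a union bound over `s` costs `2 t⁻³` per round, and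
`2 ∑ t⁻³ ≤ 5 / 2`.
-/

open MeasureTheory ProbabilityTheory Finset Real

section Hoeffding

variable {Ω : Type*} [MeasurableSpace Ω] {μ : Measure Ω} [IsProbabilityMeasure μ]
  {X : ℕ → Ω → ℝ} {m : ℝ}

noncomputable def empMean (X : ℕ → Ω → ℝ) (s : ℕ) (ω : Ω) : ℝ := (1 / s) * ∑ k ∈ Icc 1 s, X k ω

lemma measureReal_le_empMean_le (hXm : ∀ k, Measurable (X k)) (hind : iIndepFun X μ)
    (hX : ∀ k ω, X k ω ∈ Set.Icc 0 1) (hmean : ∀ k, μ[X k] = m) {s : ℕ} (hs : 0 < s)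
    {ε : ℝ} (hε : 0 ≤ ε) :
    μ.real {ω | m + ε ≤ empMean X s ω} ≤ exp (-2 * s * ε ^ 2) := by
  have hsubG : ∀ k ∈ Icc 1 s, HasSubgaussianMGF (fun ω ↦ X k ω - m) (1 / 4) μ := by
    intro k _
    have := hasSubgaussianMGF_of_mem_Icc (μ := μ) (hXm k).aemeasurable (ae_of_all _ (hX k))
    rw [hmean k] at this
    convert this using 1
    ext; norm_num
  have hindc : iIndepFun (fun k ω ↦ X k ω - m) μ :=
    hind.comp (fun _ x ↦ x - m) (fun _ ↦ by fun_prop)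
  have hs' : (0 : ℝ) < s := by exact_mod_cast hs
  calc μ.real {ω | m + ε ≤ empMean X s ω}
      = μ.real {ω | s * ε ≤ ∑ k ∈ Icc 1 s, (X k ω - m)} := by
        congr 1; ext ω
        simp only [Set.mem_ofPred_eq, empMean, sum_sub_distrib, sum_const, Nat.card_Icc,
          add_tsub_cancel_right, nsmul_eq_mul]
        rw [one_div, inv_mul_eq_div, le_div_iff₀ hs']
        constructor <;> intro h <;> linarith
    _ ≤ exp (-(s * ε) ^ 2 / (2 * ((∑ k ∈ Icc 1 s, 1 / 4 : NNReal) : ℝ))) :=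
        HasSubgaussianMGF.measure_sum_ge_le_of_iIndepFun hindc hsubG (by positivity)
    _ = exp (-2 * s * ε ^ 2) := by
        congr 1
        push_cast
        simp only [sum_const, Nat.card_Icc, add_tsub_cancel_right, nsmul_eq_mul]
        field_simp
        ring

lemma measureReal_empMean_le_le (hXm : ∀ k, Measurable (X k)) (hind : iIndepFun X μ)
    (hX : ∀ k ω, X k ω ∈ Set.Icc 0 1) (hmean : ∀ k, μ[X k] = m) {s : ℕ} (hs : 0 < s)
    {ε : ℝ} (hε : 0 ≤ ε) :
    μ.real {ω | empMean X s ω + ε ≤ m} ≤ exp (-2 * s * ε ^ 2) := by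
  have hint : ∀ k, Integrable (X k) μ := fun k ↦
    Integrable.of_mem_Icc 0 1 (hXm k).aemeasurable (ae_of_all _ (hX k))
  have h := measureReal_le_empMean_le (X := fun k ω ↦ 1 - X k ω) (m := 1 - m)
    (fun k ↦ by fun_prop) (hind.comp (fun _ x ↦ 1 - x) (fun _ ↦ by fun_prop))
    (fun k ω ↦ ⟨by linarith [(hX k ω).2], by linarith [(hX k ω).1]⟩)
    (fun k ↦ by rw [integral_sub (integrable_const 1) (hint k), hmean k]; simp) hs hε
  convert h using 3
  ext ω
  have hs' : (s : ℝ) ≠ 0 := by positivity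
  simp only [empMean, sum_sub_distrib, sum_const, Nat.card_Icc,
    add_tsub_cancel_right, nsmul_eq_mul, mul_one, mul_sub, one_div, inv_mul_cancel₀ hs']
  constructor <;> intro h <;> linarith

noncomputable def confRadius (t s : ℕ) : ℝ := √(2 * log t / s)

noncomputable def ucbIndex (X : ℕ → Ω → ℝ) (t s : ℕ) (ω : Ω) : ℝ :=
  empMean X s ω + confRadius t s

lemma exp_neg_two_mul_confRadius_sq {t s : ℕ} (ht : 0 < t) (hs : 0 < s) :
    exp (-2 * s * confRadius t s ^ 2) = ((t : ℝ) ^ 4)⁻¹ := by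
  have hs' : (0 : ℝ) < s := by exact_mod_cast hs
  have ht' : (0 : ℝ) < t := by exact_mod_cast ht
  rw [confRadius, sq_sqrt (by positivity), ← exp_log (inv_pos.2 (pow_pos ht' 4)),
    log_inv, log_pow]
  congr 1
  field_simp
  push_cast
  ring

lemma confRadius_le_half {t s : ℕ} {Δ : ℝ} (hs : 0 < s) (hΔ : 0 ≤ Δ)
    (h : 8 * log t ≤ s * Δ ^ 2) : confRadius t s ≤ Δ / 2 := by
  have hs' : (0 : ℝ) < s := by exact_mod_cast hs
  rw [confRadius, sqrt_le_left (by positivity), div_le_iff₀ hs']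
  linarith

lemma measureReal_ucbIndex_le_le (hXm : ∀ k, Measurable (X k)) (hind : iIndepFun X μ)
    (hX : ∀ k ω, X k ω ∈ Set.Icc 0 1) (hmean : ∀ k, μ[X k] = m) {t s : ℕ} (ht : 0 < t)
    (hs : 0 < s) : μ.real {ω | ucbIndex X t s ω ≤ m} ≤ ((t : ℝ) ^ 4)⁻¹ :=
  exp_neg_two_mul_confRadius_sq ht hs ▸
    measureReal_empMean_le_le hXm hind hX hmean hs (sqrt_nonneg _)

lemma measureReal_add_confRadius_le_le (hXm : ∀ k, Measurable (X k)) (hind : iIndepFun X μ)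
    (hX : ∀ k ω, X k ω ∈ Set.Icc 0 1) (hmean : ∀ k, μ[X k] = m) {t s : ℕ} (ht : 0 < t)
    (hs : 0 < s) : μ.real {ω | m + confRadius t s ≤ empMean X s ω} ≤ ((t : ℝ) ^ 4)⁻¹ :=
  exp_neg_two_mul_confRadius_sq ht hs ▸
    measureReal_le_empMean_le hXm hind hX hmean hs (sqrt_nonneg _)

lemma measureReal_biUnion_confidence_failure_le {Y : ℕ → Ω → ℝ} {m' : ℝ}
    (hXm : ∀ k, Measurable (X k)) (hind : iIndepFun X μ) (hX : ∀ k ω, X k ω ∈ Set.Icc 0 1)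
    (hmean : ∀ k, μ[X k] = m) (hYm : ∀ k, Measurable (Y k)) (hindY : iIndepFun Y μ)
    (hY : ∀ k ω, Y k ω ∈ Set.Icc 0 1) (hmeanY : ∀ k, μ[Y k] = m') {t : ℕ} (ht : 0 < t) :
    μ.real (⋃ s ∈ Icc 1 t, ({ω | ucbIndex Y t s ω ≤ m'} ∪ {ω | m + confRadius t s ≤ empMean X s ω}))
      ≤ 2 * ((t : ℝ) ^ 3)⁻¹ := by
  calc _ ≤ ∑ s ∈ Icc 1 t,
          μ.real ({ω | ucbIndex Y t s ω ≤ m'} ∪ {ω | m + confRadius t s ≤ empMean X s ω}) :=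
        measureReal_biUnion_finset_le _ _
    _ ≤ ∑ s ∈ Icc 1 t, (((t : ℝ) ^ 4)⁻¹ + ((t : ℝ) ^ 4)⁻¹) := by
        refine sum_le_sum fun s hs ↦ (measureReal_union_le _ _).trans ?_
        have hs : 0 < s := (mem_Icc.1 hs).1
        exact add_le_add (measureReal_ucbIndex_le_le hYm hindY hY hmeanY ht hs)
          (measureReal_add_confRadius_le_le hXm hind hX hmean ht hs)
    _ = 2 * ((t : ℝ) ^ 3)⁻¹ := by
        have ht' : (t : ℝ) ≠ 0 := by positivity
        rw [sum_const, Nat.card_Icc, add_tsub_cancel_right, nsmul_eq_mul]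
        field_simp
        ring

end Hoeffding

lemma sum_Icc_inv_pow_three_le_sub {n : ℕ} (hn : 1 ≤ n) :
    ∑ t ∈ Icc 1 n, ((t : ℝ) ^ 3)⁻¹ ≤ 5 / 4 - (2 * (n : ℝ) * (n + 1))⁻¹ := by
  induction n, hn using Nat.le_induction with
  | base => norm_num
  | succ n hn ih =>
    rw [sum_Icc_succ_top (by omega)]
    have hn' : (1 : ℝ) ≤ n := by exact_mod_cast hn
    -- `1 / (n + 1) ^ 3 ≤ 1 / (n (n + 1) (n + 2))` telescopes
    have hstep : (((n + 1 : ℕ) : ℝ) ^ 3)⁻¹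
        ≤ (2 * (n : ℝ) * (n + 1))⁻¹ - (2 * ((n + 1 : ℕ) : ℝ) * ((n + 1 : ℕ) + 1))⁻¹ := by
      push_cast
      rw [inv_sub_inv (by positivity) (by positivity), inv_eq_one_div,
        div_le_div_iff₀ (by positivity) (by positivity)]
      nlinarith [pow_pos (show (0 : ℝ) < n from by linarith) 3]
    linarith

lemma sum_Icc_inv_pow_three_le (n : ℕ) : ∑ t ∈ Icc 1 n, ((t : ℝ) ^ 3)⁻¹ ≤ 5 / 4 := by
  rcases Nat.eq_zero_or_pos n with rfl | hn
  · norm_num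
  · have hpos : (0 : ℝ) ≤ (2 * (n : ℝ) * (n + 1))⁻¹ := by positivity
    linarith [sum_Icc_inv_pow_three_le_sub hn]

lemma card_filter_lt_le_add {p : ℕ → Prop} [DecidablePred p] {f : ℕ → ℕ} {n ℓ G : ℕ}
    (hG : ∀ t ∈ Icc 1 n, #{s ∈ Icc 1 (t - 1) | p s} - f (t - 1) ≤ G) :
    #{t ∈ Icc 1 n | p t ∧ f (t - 1) < ℓ} ≤ ℓ + G := by
  set A := {t ∈ Icc 1 n | p t ∧ f (t - 1) < ℓ}
  obtain hA | hA := A.eq_empty_or_nonempty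
  · simp [hA]
  obtain ⟨t₀, ht₀, hmax⟩ := A.exists_max_image id hA
  obtain ⟨⟨h1, hn⟩, hp, hf⟩ : (1 ≤ t₀ ∧ t₀ ≤ n) ∧ p t₀ ∧ f (t₀ - 1) < ℓ := by
    simpa [A] using ht₀
  obtain ⟨u, rfl⟩ : ∃ u, t₀ = u + 1 := ⟨t₀ - 1, by omega⟩
  have hsub : A ⊆ {s ∈ Icc 1 (u + 1) | p s} := fun t ht ↦ by
    have := hmax t ht
    simp only [A, mem_filter, mem_Icc, id] at ht this ⊢
    exact ⟨⟨ht.1.1, this⟩, ht.2.1⟩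
  have hlast : #{s ∈ Icc 1 (u + 1) | p s} = #{s ∈ Icc 1 u | p s} + 1 := by
    rw [← insert_Icc_right_eq_Icc_add_one (by omega), filter_insert, if_pos hp,
      card_insert_of_notMem (by simp)]
  have hGu := hG (u + 1) (mem_Icc.2 ⟨h1, hn⟩)
  simp only [add_tsub_cancel_right] at hGu hf
  have := card_le_card hsub
  omega

lemma card_filter_le_add_card_filter {p : ℕ → Prop} [DecidablePred p] {f : ℕ → ℕ} {n G : ℕ}
    (ℓ : ℕ) (hG : ∀ t ∈ Icc 1 n, #{s ∈ Icc 1 (t - 1) | p s} - f (t - 1) ≤ G) :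
    #{t ∈ Icc 1 n | p t} ≤ ℓ + G + #{t ∈ Icc 1 n | p t ∧ ℓ ≤ f (t - 1)} := by
  have hsplit := card_filter_add_card_filter_not
    (s := {t ∈ Icc 1 n | p t}) (fun t ↦ f (t - 1) < ℓ)
  simp only [filter_filter, not_lt] at hsplit
  have := card_filter_lt_le_add (ℓ := ℓ) hG
  omega

section CardFilter

variable {Ω ι : Type*} [MeasurableSpace Ω] {μ : Measure Ω} {s : Finset ι} {P : ι → Ω → Prop}
  [∀ i ω, Decidable (P i ω)]

lemma measurable_sup_apply {α : Type*} [MeasurableSpace α] [SemilatticeSup α] [OrderBot α]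
    [MeasurableSup₂ α] {f : ι → Ω → α} (hf : ∀ i ∈ s, Measurable (f i)) :
    Measurable fun ω ↦ s.sup fun i ↦ f i ω := by
  simp_rw [← Finset.sup_apply]
  exact Finset.sup_induction (p := Measurable) measurable_const (fun _ h _ h' ↦ h.sup h') hf

lemma measurable_card_filter (hP : ∀ i ∈ s, MeasurableSet {ω | P i ω}) :
    Measurable fun ω ↦ #{i ∈ s | P i ω} := by
  simp_rw [card_filter]
  exact Finset.measurable_sum _ fun i hi ↦
    Measurable.ite (hP i hi) measurable_const measurable_const

lemma integrable_natCast_of_le [IsFiniteMeasure μ] {f : Ω → ℕ} (hf : Measurable f) {N : ℕ}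
    (hN : ∀ ω, f ω ≤ N) : Integrable (fun ω ↦ (f ω : ℝ)) μ :=
  .of_bound (measurable_from_top.comp hf).aestronglyMeasurable N
    (ae_of_all _ fun ω ↦ by simpa using hN ω)

lemma integrable_card_filter [IsFiniteMeasure μ] (hP : ∀ i ∈ s, MeasurableSet {ω | P i ω}) :
    Integrable (fun ω ↦ (#{i ∈ s | P i ω} : ℝ)) μ :=
  integrable_natCast_of_le (measurable_card_filter hP) fun _ ↦ card_filter_le _ _

lemma integral_card_filter [IsFiniteMeasure μ] (hP : ∀ i ∈ s, MeasurableSet {ω | P i ω}) :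
    ∫ ω, (#{i ∈ s | P i ω} : ℝ) ∂μ = ∑ i ∈ s, μ.real {ω | P i ω} := by
  have hind : ∀ ω, (#{i ∈ s | P i ω} : ℝ) = ∑ i ∈ s, {ω | P i ω}.indicator 1 ω := fun ω ↦ by
    rw [card_filter]
    push_cast
    simp [Set.indicator_apply]
  simp_rw [hind]
  rw [integral_finsetSum _ fun i hi ↦ (integrable_const 1).indicator (hP i hi)]
  exact sum_congr rfl fun i hi ↦ integral_indicator_one (hP i hi)

end CardFilter

section DelayedUCB1

variable {Ω ι : Type*} [DecidableEq ι]
  {X : ι → ℕ → Ω → ℝ} {m : ι → ℝ} {a : ℕ → Ω → ι} {S : ι → ℕ → Ω → ℕ} {n : ℕ} {i i' : ι}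

lemma setOf_play_subset_biUnion
    (hST : ∀ j t ω, t ≤ n → S j t ω ≤ #{s ∈ Icc 1 t | a s ω = j})
    (harg1 : ∀ t ω, 1 ≤ t → t ≤ n → (∀ j, 1 ≤ S j (t - 1) ω) →
      ∀ j, ucbIndex (X j) t (S j (t - 1) ω) ω ≤ ucbIndex (X (a t ω)) t (S (a t ω) (t - 1) ω) ω)
    (harg2 : ∀ t ω, 1 ≤ t → t ≤ n → (∃ j, S j (t - 1) ω = 0) → S (a t ω) (t - 1) ω = 0)
    (hgap : m i ≤ m i') {t ℓ : ℕ} (ht : t ∈ Icc 1 n) (hℓ : 1 ≤ ℓ)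
    (hlog : 8 * log n ≤ ℓ * (m i' - m i) ^ 2) :
    {ω | a t ω = i ∧ ℓ ≤ S i (t - 1) ω} ⊆ ⋃ s ∈ Icc 1 t,
      ({ω | ucbIndex (X i') t s ω ≤ m i'} ∪ {ω | m i + confRadius t s ≤ empMean (X i) s ω}) := by
  rintro ω ⟨hat, hℓS⟩
  obtain ⟨ht1, htn⟩ := mem_Icc.1 ht
  -- an arm with an observed reward is played only once every arm has one
  have hobs : ∀ j, 1 ≤ S j (t - 1) ω := by
    by_contra! ⟨j, hj⟩
    have := harg2 t ω ht1 htn ⟨j, by omega⟩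
    rw [hat] at this
    omega
  have hle : ∀ j, S j (t - 1) ω ≤ t := fun j ↦ calc
    S j (t - 1) ω ≤ #{s ∈ Icc 1 (t - 1) | a s ω = j} := hST j (t - 1) ω (by omega)
    _ ≤ #(Icc 1 (t - 1)) := card_filter_le _ _
    _ ≤ t := by simp
  have hcmp := harg1 t ω ht1 htn hobs i'
  rw [hat] at hcmp
  simp only [Set.mem_iUnion, Set.mem_union, Set.mem_ofPred_eq, exists_prop]
  by_cases hfail : ucbIndex (X i') t (S i' (t - 1) ω) ω ≤ m i'
  · exact ⟨_, mem_Icc.2 ⟨hobs i', hle i'⟩, Or.inl hfail⟩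
  refine ⟨_, mem_Icc.2 ⟨hobs i, hle i⟩, Or.inr ?_⟩
  have hrad : confRadius t (S i (t - 1) ω) ≤ (m i' - m i) / 2 := by
    refine confRadius_le_half (hobs i) (sub_nonneg.2 hgap) ?_
    have hlogt : log t ≤ log n := log_le_log (by exact_mod_cast ht1) (by exact_mod_cast htn)
    have hℓS' : (ℓ : ℝ) ≤ S i (t - 1) ω := by exact_mod_cast hℓS
    nlinarith [sq_nonneg (m i' - m i)]
  unfold ucbIndex at hcmp hfail
  linarith

variable [MeasurableSpace Ω] {μ : Measure Ω} [IsProbabilityMeasure μ] [MeasurableSpace ι]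
  [MeasurableSingletonClass ι]

lemma integrable_sup_card_filter_sub (ha : ∀ t, Measurable (a t))
    (hSm : ∀ j t, Measurable (S j t)) :
    Integrable (fun ω ↦
      (((Icc 1 n).sup fun t ↦ #{s ∈ Icc 1 (t - 1) | a s ω = i} - S i (t - 1) ω : ℕ) : ℝ)) μ := by
  refine integrable_natCast_of_le (N := n) (measurable_sup_apply fun t _ ↦
    (measurable_card_filter fun s _ ↦ ha s (measurableSet_singleton i)).sub (hSm i (t - 1)))
    fun ω ↦ Finset.sup_le fun t ht ↦ ?_
  have := card_filter_le (Icc 1 (t - 1)) fun s ↦ a s ω = i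
  simp only [Nat.card_Icc] at this
  have := (mem_Icc.1 ht).2
  omega

lemma integral_card_play_le (hXm : ∀ j k, Measurable (X j k)) (hind : ∀ j, iIndepFun (X j) μ)
    (hX : ∀ j k ω, X j k ω ∈ Set.Icc 0 1) (hmean : ∀ j k, μ[X j k] = m j)
    (ha : ∀ t, Measurable (a t)) (hSm : ∀ j t, Measurable (S j t))
    (hST : ∀ j t ω, t ≤ n → S j t ω ≤ #{s ∈ Icc 1 t | a s ω = j})
    (harg1 : ∀ t ω, 1 ≤ t → t ≤ n → (∀ j, 1 ≤ S j (t - 1) ω) →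
      ∀ j, ucbIndex (X j) t (S j (t - 1) ω) ω ≤ ucbIndex (X (a t ω)) t (S (a t ω) (t - 1) ω) ω)
    (harg2 : ∀ t ω, 1 ≤ t → t ≤ n → (∃ j, S j (t - 1) ω = 0) → S (a t ω) (t - 1) ω = 0)
    (hgap : m i < m i') :
    μ[fun ω ↦ (#{t ∈ Icc 1 n | a t ω = i} : ℝ)]
      ≤ 8 * log n / (m i' - m i) ^ 2 + 7 / 2
        + μ[fun ω ↦
            (((Icc 1 n).sup fun t ↦ #{s ∈ Icc 1 (t - 1) | a s ω = i} - S i (t - 1) ω : ℕ) : ℝ)] := by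
  set G := fun ω ↦ (Icc 1 n).sup fun t ↦ #{s ∈ Icc 1 (t - 1) | a s ω = i} - S i (t - 1) ω
  set x := 8 * log n / (m i' - m i) ^ 2
  have hx : 0 ≤ x := div_nonneg (mul_nonneg (by norm_num) (log_natCast_nonneg n)) (sq_nonneg _)
  -- the number of observations beyond which arm `i` is played only on a confidence failure
  set ℓ := ⌊x⌋₊ + 1
  have hℓ : (ℓ : ℝ) ≤ x + 1 := by
    simp only [ℓ, Nat.cast_add, Nat.cast_one, add_le_add_iff_right]
    exact Nat.floor_le hx
  have hxℓ : x ≤ ℓ := by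
    simp only [ℓ, Nat.cast_add, Nat.cast_one]
    exact (Nat.lt_floor_add_one x).le
  have hlog : 8 * log n ≤ ℓ * (m i' - m i) ^ 2 := (div_le_iff₀ (pow_pos (sub_pos.2 hgap) 2)).1 hxℓ
  have hplay : ∀ t, MeasurableSet {ω | a t ω = i} := fun t ↦ ha t (measurableSet_singleton i)
  have hbad : ∀ t, MeasurableSet {ω | a t ω = i ∧ ℓ ≤ S i (t - 1) ω} := fun t ↦
    (hplay t).inter (hSm i (t - 1) measurableSet_Ici)
  have hGint : Integrable (fun ω ↦ (G ω : ℝ)) μ := integrable_sup_card_filter_sub ha hSm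
  have hℓG : Integrable (fun ω ↦ (ℓ : ℝ) + G ω) μ := (integrable_const _).add hGint
  have hpath : ∀ ω, (#{t ∈ Icc 1 n | a t ω = i} : ℝ)
      ≤ ℓ + G ω + #{t ∈ Icc 1 n | a t ω = i ∧ ℓ ≤ S i (t - 1) ω} := fun ω ↦ by
    exact_mod_cast card_filter_le_add_card_filter (p := fun t ↦ a t ω = i)
      (f := fun t ↦ S i t ω) ℓ fun t ht ↦
      le_sup (f := fun t ↦ #{s ∈ Icc 1 (t - 1) | a s ω = i} - S i (t - 1) ω) ht
  have hprob : ∀ t ∈ Icc 1 n, μ.real {ω | a t ω = i ∧ ℓ ≤ S i (t - 1) ω} ≤ 2 * ((t : ℝ) ^ 3)⁻¹ :=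
    fun t ht ↦ (measureReal_mono (setOf_play_subset_biUnion hST harg1 harg2 hgap.le ht
      (Nat.le_add_left 1 _) hlog) (measure_ne_top _ _)).trans
      (measureReal_biUnion_confidence_failure_le (hXm i) (hind i) (hX i) (hmean i) (hXm i')
        (hind i') (hX i') (hmean i') (mem_Icc.1 ht).1)
  calc μ[fun ω ↦ (#{t ∈ Icc 1 n | a t ω = i} : ℝ)]
      ≤ μ[fun ω ↦ ℓ + (G ω : ℝ) + #{t ∈ Icc 1 n | a t ω = i ∧ ℓ ≤ S i (t - 1) ω}] := by
        exact integral_mono (integrable_card_filter fun t _ ↦ hplay t)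
          (hℓG.add (integrable_card_filter fun t _ ↦ hbad t)) hpath
    _ = ℓ + μ[fun ω ↦ (G ω : ℝ)] + ∑ t ∈ Icc 1 n, μ.real {ω | a t ω = i ∧ ℓ ≤ S i (t - 1) ω} := by
        beta_reduce
        rw [integral_add hℓG (integrable_card_filter fun t _ ↦ hbad t),
          integral_add (integrable_const _) hGint, integral_const,
          integral_card_filter fun t _ ↦ hbad t]
        simp
    _ ≤ (x + 1) + μ[fun ω ↦ (G ω : ℝ)] + 2 * (5 / 4) := by
        have hsum := sum_le_sum hprob
        rw [← mul_sum] at hsum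
        linarith [sum_Icc_inv_pow_three_le n]
    _ = x + 7 / 2 + μ[fun ω ↦ (G ω : ℝ)] := by ring

end DelayedUCB1

theorem delayed_ucb1_regret_general
    {Ω : Type*} [MeasurableSpace Ω] (μ : Measure Ω) [IsProbabilityMeasure μ]
    (K : ℕ) (hK : 1 ≤ K) (n : ℕ)
    (μi : Fin K → ℝ)
    (μstar : ℝ) (hμstar : μstar = Finset.univ.sup' (Finset.univ_nonempty_iff.mpr
        (Fin.pos_iff_nonempty.mp hK)) μi)
    (Δ : Fin K → ℝ) (hΔ : ∀ i, Δ i = μstar - μi i)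
    -- the sequence of observed rewards of each arm is i.i.d. with mean `μi i`,
    -- with values in [0,1] (Lemma 1; delays are independent of rewards):
    (hpr : Fin K → ℕ → Ω → ℝ)
    (hprmeas : ∀ i k, Measurable (hpr i k))
    (hpriid : ∀ i, iIndepFun (hpr i) μ)
    (hprbdd : ∀ i k ω, hpr i k ω ∈ Set.Icc (0 : ℝ) 1)
    (hprmean : ∀ i k, μ[hpr i k] = μi i)
    -- plays, observed-feedback counts, and play counts:
    (a : ℕ → Ω → Fin K) (hameas : ∀ t, Measurable (a t))
    (S : Fin K → ℕ → Ω → ℕ) (hSmeas : ∀ i t, Measurable (S i t))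
    (T : Fin K → ℕ → Ω → ℕ)
    (hT : ∀ i t ω, T i t ω = ((Finset.Icc 1 t).filter (fun s => a s ω = i)).card)
    (hST : ∀ i t ω, t ≤ n → S i t ω ≤ T i t ω)
    -- the empirical means and upper confidence bounds of Delayed-UCB1:
    (muhat : Fin K → ℕ → Ω → ℝ)
    (hmuhat : ∀ i s ω, muhat i s ω = (1 / s) * ∑ k ∈ Finset.Icc 1 s, hpr i k ω)
    (B : Fin K → ℕ → ℕ → Ω → ℝ)
    (hB : ∀ i s t ω, B i s t ω = muhat i s ω + Real.sqrt (2 * Real.log t / s))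
    -- the decision rule: play a never-observed arm if one exists, otherwise
    -- play the arm maximizing the upper confidence bound:
    (harg1 : ∀ t ω, 1 ≤ t → t ≤ n → (∀ j, 1 ≤ S j (t - 1) ω) →
      ∀ j, B j (S j (t - 1) ω) t ω ≤ B (a t ω) (S (a t ω) (t - 1) ω) t ω)
    (harg2 : ∀ t ω, 1 ≤ t → t ≤ n → (∃ j, S j (t - 1) ω = 0) →
      S (a t ω) (t - 1) ω = 0) :
    ∑ i, Δ i * μ[fun ω => (T i n ω : ℝ)]
      ≤ (∑ i ∈ Finset.univ.filter (fun i => 0 < Δ i), (8 * Real.log n / Δ i + 3.5 * Δ i))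
        + ∑ i, Δ i * μ[fun ω =>
            (((Finset.Icc 1 n).sup (fun t => T i (t - 1) ω - S i (t - 1) ω) : ℕ) : ℝ)] := by
  obtain rfl : muhat = fun i ↦ empMean (hpr i) := by
    funext i s ω
    exact hmuhat i s ω
  obtain rfl : B = fun i s t ↦ ucbIndex (hpr i) t s := by
    funext i s t ω
    exact hB i s t ω
  obtain rfl : T = fun i t ω ↦ #{s ∈ Icc 1 t | a s ω = i} := by
    funext i t ω
    exact hT i t ω
  obtain ⟨istar, -, hstar⟩ := exists_mem_eq_sup' _ μi
  have hΔ' : ∀ i, Δ i = μi istar - μi i := fun i ↦ by rw [hΔ, hμstar, hstar]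
  rw [sum_filter, ← sum_add_distrib]
  refine sum_le_sum fun i _ ↦ ?_
  have hΔnonneg : 0 ≤ Δ i := hΔ' i ▸ sub_nonneg.2 (hstar ▸ le_sup' μi (mem_univ i))
  obtain hΔi | hΔi := hΔnonneg.eq_or_lt
  · simp [← hΔi]
  have hplays := integral_card_play_le hprmeas hpriid hprbdd hprmean hameas hSmeas hST harg1 harg2
    (sub_pos.1 (hΔ' i ▸ hΔi))
  rw [← hΔ' i] at hplays
  rw [if_pos hΔi]
  calc Δ i * _ ≤ Δ i * (8 * log n / Δ i ^ 2 + 7 / 2 + _) :=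
        mul_le_mul_of_nonneg_left hplays hΔi.le
    _ = _ := by
        field_simp
        norm_num
        ring

/-- Theorem 4, regret of Delayed-UCB1: in a stochastic `K`-armed bandit
with `[0,1]`-valued rewards and delayed feedback, `hpr i k` denotes the `k`-th observed
reward of arm `i` (for each arm these are i.i.d. with mean `μi i` — the conclusion of
Lemma 1, since delays are independent of rewards), `a t` is the arm played at round `t`,
`S i t` the number of feedbacks of arm `i` received by the end of round `t`, and
`T i t` the number of plays of arm `i` in rounds `1,…,t`.  The algorithm plays
`a t = argmax_i (μ̂_{i,S_i(t-1)} + √(2 log t / S_i(t-1)))` over the arms (with each arm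
observed at least once, i.e. arms with no observed reward are played first).  Then with
`Δ i = μ* − μi i` and `G*_{i,n} = max_{1 ≤ t ≤ n} (T i (t-1) − S i (t-1))`,
`E[R_n] = ∑_i Δ_i E[T_i(n)] ≤ ∑_{i : Δ_i > 0} (8 log n / Δ_i + 3.5 Δ_i)
  + ∑_i Δ_i E[G*_{i,n}]`. -/
theorem delayed_ucb1_regret
    {Ω : Type*} [MeasurableSpace Ω] (μ : Measure Ω) [IsProbabilityMeasure μ]
    (K : ℕ) (hK : 1 ≤ K) (n : ℕ) (hn : 1 ≤ n)
    (μi : Fin K → ℝ)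
    (μstar : ℝ) (hμstar : μstar = Finset.univ.sup' (Finset.univ_nonempty_iff.mpr
        (Fin.pos_iff_nonempty.mp hK)) μi)
    (Δ : Fin K → ℝ) (hΔ : ∀ i, Δ i = μstar - μi i)
    -- the sequence of observed rewards of each arm is i.i.d. with mean `μi i`,
    -- with values in [0,1] (Lemma 1; delays are independent of rewards):
    (hpr : Fin K → ℕ → Ω → ℝ)
    (hprmeas : ∀ i k, Measurable (hpr i k))
    (hpriid : ∀ i, iIndepFun (hpr i) μ)
    (hprident : ∀ i k, Measure.map (hpr i k) μ = Measure.map (hpr i 1) μ)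
    (hprbdd : ∀ i k ω, hpr i k ω ∈ Set.Icc (0 : ℝ) 1)
    (hprmean : ∀ i k, μ[hpr i k] = μi i)
    -- plays, observed-feedback counts, and play counts:
    (a : ℕ → Ω → Fin K) (hameas : ∀ t, Measurable (a t))
    (S : Fin K → ℕ → Ω → ℕ) (hSmeas : ∀ i t, Measurable (S i t))
    (hS0 : ∀ i ω, S i 0 ω = 0) (hSmono : ∀ i ω, Monotone (fun t => S i t ω))
    (T : Fin K → ℕ → Ω → ℕ)
    (hT : ∀ i t ω, T i t ω = ((Finset.Icc 1 t).filter (fun s => a s ω = i)).card)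
    (hST : ∀ i t ω, t ≤ n → S i t ω ≤ T i t ω)
    -- the empirical means and upper confidence bounds of Delayed-UCB1:
    (muhat : Fin K → ℕ → Ω → ℝ)
    (hmuhat : ∀ i s ω, muhat i s ω = (1 / s) * ∑ k ∈ Finset.Icc 1 s, hpr i k ω)
    (B : Fin K → ℕ → ℕ → Ω → ℝ)
    (hB : ∀ i s t ω, B i s t ω = muhat i s ω + Real.sqrt (2 * Real.log t / s))
    -- the decision rule: play a never-observed arm if one exists, otherwise
    -- play the arm maximizing the upper confidence bound:
    (harg1 : ∀ t ω, 1 ≤ t → t ≤ n → (∀ j, 1 ≤ S j (t - 1) ω) →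
      ∀ j, B j (S j (t - 1) ω) t ω ≤ B (a t ω) (S (a t ω) (t - 1) ω) t ω)
    (harg2 : ∀ t ω, 1 ≤ t → t ≤ n → (∃ j, S j (t - 1) ω = 0) →
      S (a t ω) (t - 1) ω = 0) :
    ∑ i, Δ i * μ[fun ω => (T i n ω : ℝ)]
      ≤ (∑ i ∈ Finset.univ.filter (fun i => 0 < Δ i), (8 * Real.log n / Δ i + 3.5 * Δ i))
        + ∑ i, Δ i * μ[fun ω =>
            (((Finset.Icc 1 n).sup (fun t => T i (t - 1) ω - S i (t - 1) ω) : ℕ) : ℝ)] :=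
  delayed_ucb1_regret_general μ K hK n μi μstar hμstar Δ hΔ hpr hprmeas hpriid hprbdd hprmean a
    hameas S hSmeas T hT hST muhat hmuhat B hB harg1 harg2
end
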